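/- arXiv:2304.10989 — 2 statements merged into one kernel-verified Lean document; each statement's English description precedes it below -/
import Mathlib

section
/- If the exceptional set E_S is empty (equivalently, the projective monomial curve associated to A is arithmetically Cohen–Macaulay), then the sequence (|sA| − |(s−1)A|)_{s≥0} is increasing: for all s ≥ 1, |(s+1)A| − |sA| ≥ |sA| − |(s−1)A|. -/
open scoped BigOperators

namespace SumsetsCurve

/-- The `s`-fold sumset of `A = {a 0, …, a (n-1)}`:
all sums of `s` elements of `A` (with `0A = {0}`). -/
def sumset (n : ℕ) (a : ℕ → ℕ) (s : ℕ) : Set ℕ :=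
  {x | ∃ f : Fin s → ℕ, (∀ i, f i < n) ∧ x = ∑ i, a (f i)}

/-- The numerical semigroup (additive submonoid of ℕ) generated by `B`. -/
def numSG (B : Set ℕ) : Set ℕ := (AddSubmonoid.closure B : AddSubmonoid ℕ)

/-- `S₁`, the numerical semigroup generated by `A`. -/
def S1 (n : ℕ) (a : ℕ → ℕ) : Set ℕ := numSG {x | ∃ i < n, a i = x}

/-- `S₂`, the numerical semigroup generated by `d - A`. -/
def S2 (n d : ℕ) (a : ℕ → ℕ) : Set ℕ := numSG {x | ∃ i < n, d - a i = x}

/-- The conductor of `S ⊆ ℕ`: the least `c` with `c + ℕ ⊆ S`. -/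
noncomputable def conductor (S : Set ℕ) : ℕ := sInf {c | ∀ m, c ≤ m → m ∈ S}

/-- The genus of `S ⊆ ℕ`: the number of gaps `|ℕ \ S|`. -/
noncomputable def genus (S : Set ℕ) : ℕ := Set.ncard {x : ℕ | x ∉ S}

/-- `C = S ∩ [0, conductor S - 2]` (the inequality is taken in ℤ). -/
def Cpart (S : Set ℕ) : Set ℕ := {x | x ∈ S ∧ (x : ℤ) ≤ (conductor S : ℤ) - 2}

/-- The decomposition `sA = C₁ ⊔ [c₁, sd - c₂] ⊔ (sd - C₂)` of the Structure Theorem,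
viewed inside ℤ. -/
def structDecomp (n d : ℕ) (a : ℕ → ℕ) (s : ℕ) : Prop :=
  (Nat.cast '' sumset n a s : Set ℤ)
      = (Nat.cast '' Cpart (S1 n a))
        ∪ Set.Icc ((conductor (S1 n a) : ℤ)) ((s * d : ℤ) - (conductor (S2 n d a) : ℤ))
        ∪ ((fun c => (s * d : ℤ) - c) '' (Nat.cast '' Cpart (S2 n d a)))
    ∧ Disjoint (Nat.cast '' Cpart (S1 n a) : Set ℤ)
        (Set.Icc ((conductor (S1 n a) : ℤ)) ((s * d : ℤ) - (conductor (S2 n d a) : ℤ)))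
    ∧ Disjoint (Nat.cast '' Cpart (S1 n a) : Set ℤ)
        ((fun c => (s * d : ℤ) - c) '' (Nat.cast '' Cpart (S2 n d a)))
    ∧ Disjoint
        (Set.Icc ((conductor (S1 n a) : ℤ)) ((s * d : ℤ) - (conductor (S2 n d a) : ℤ)))
        ((fun c => (s * d : ℤ) - c) '' (Nat.cast '' Cpart (S2 n d a)))

/-- `σ(A)`: the least `σ` such that the Structure Theorem decomposition holds
for all `s ≥ σ`. -/
noncomputable def sigmaA (n d : ℕ) (a : ℕ → ℕ) : ℕ :=
  sInf {σ | ∀ s, σ ≤ s → structDecomp n d a s}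

/-- `r(A)`: the least `r` such that `|sA| = sd + 1 - g₁ - g₂` for all `s ≥ r`
(the regularity of the Hilbert function of `k[C_A]`). -/
noncomputable def rA (n d : ℕ) (a : ℕ → ℕ) : ℕ :=
  sInf {r | ∀ s, r ≤ s →
    ((sumset n a s).ncard : ℤ)
      = (s : ℤ) * d + 1 - genus (S1 n a) - genus (S2 n d a)}

/-- The homogeneous semigroup `S ⊆ ℕ²` generated by `{(a, d-a) : a ∈ A}`. -/
def SS (n d : ℕ) (a : ℕ → ℕ) : Set (ℕ × ℕ) :=
  (AddSubmonoid.closure {p : ℕ × ℕ | ∃ i < n, p = (a i, d - a i)} : AddSubmonoid (ℕ × ℕ))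

/-- The Apery set `AP_S = {p ∈ S : p - (0,d) ∉ S, p - (d,0) ∉ S}`. -/
def APS (n d : ℕ) (a : ℕ → ℕ) : Set (ℕ × ℕ) :=
  {p ∈ SS n d a |
    (¬ ∃ q ∈ SS n d a, q + (0, d) = p) ∧ (¬ ∃ q ∈ SS n d a, q + (d, 0) = p)}

/-- The exceptional set
`E_S = {p ∈ S : p - (0,d) ∈ S, p - (d,0) ∈ S, p - (d,d) ∉ S}`. -/
def ES (n d : ℕ) (a : ℕ → ℕ) : Set (ℕ × ℕ) :=
  {p ∈ SS n d a |
    (∃ q ∈ SS n d a, q + (0, d) = p) ∧ (∃ q ∈ SS n d a, q + (d, 0) = p) ∧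
      (¬ ∃ q ∈ SS n d a, q + (d, d) = p)}

/-- The level `L_s = {(x,y) ∈ ℕ² : x + y = sd}`. -/
def Lev (d s : ℕ) : Set (ℕ × ℕ) := {p | p.1 + p.2 = s * d}

/-- `AP_s = AP_S ∩ L_s`. -/
def APs (n d : ℕ) (a : ℕ → ℕ) (s : ℕ) : Set (ℕ × ℕ) := APS n d a ∩ Lev d s

/-- `E_s = E_S ∩ L_s`. -/
def Es (n d : ℕ) (a : ℕ → ℕ) (s : ℕ) : Set (ℕ × ℕ) := ES n d a ∩ Lev d s

/-- `m(AP_S) = max {s : AP_s ≠ ∅}`. -/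
noncomputable def mAP (n d : ℕ) (a : ℕ → ℕ) : ℕ := sSup {s | APs n d a s ≠ ∅}

/-- The Apery set of `S₁` with respect to `d`: `{x ∈ S₁ : x - d ∉ S₁}`. -/
def Ap1 (n d : ℕ) (a : ℕ → ℕ) : Set ℕ := {x ∈ S1 n a | ¬ ∃ y ∈ S1 n a, y + d = x}

/-- The Apery set of `S₂` with respect to `d`: `{x ∈ S₂ : x - d ∉ S₂}`. -/
def Ap2 (n d : ℕ) (a : ℕ → ℕ) : Set ℕ := {x ∈ S2 n d a | ¬ ∃ y ∈ S2 n d a, y + d = x}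

/-- `G`, the subgroup of ℤ² generated by `S`. -/
def G (n d : ℕ) (a : ℕ → ℕ) : AddSubgroup (ℤ × ℤ) :=
  AddSubgroup.closure {p | ∃ i < n, p = ((a i : ℤ), (d : ℤ) - (a i : ℤ))}

/-- `S₁` viewed inside ℤ. -/
def S1Z (n : ℕ) (a : ℕ → ℕ) : Set ℤ := Nat.cast '' S1 n a

/-- `S₂` viewed inside ℤ. -/
def S2Z (n d : ℕ) (a : ℕ → ℕ) : Set ℤ := Nat.cast '' S2 n d a

/-- `S' = G ∩ (S₁ × S₂)`. -/
def Sprime (n d : ℕ) (a : ℕ → ℕ) : Set (ℤ × ℤ) :=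
  {p | p ∈ G n d a ∧ p.1 ∈ S1Z n a ∧ p.2 ∈ S2Z n d a}

/-- The homogeneous semigroup `S` viewed inside ℤ². -/
def SZ (n d : ℕ) (a : ℕ → ℕ) : Set (ℤ × ℤ) :=
  (fun p : ℕ × ℕ => ((p.1 : ℤ), (p.2 : ℤ))) '' SS n d a

/-!
Adding `d = max A` maps `sA \ (s-1)A` injectively into `(s+1)A \ sA`, which gives the inequality.
Indeed, if `y` and `y + d` both lie in `sA`, then `p = (y + d, sd - y)` lies in `S` together with
`p - (0,d)` and `p - (d,0)`; as `p ∉ E_S`, also `p - (d,d) = (y, (s-1)d - y) ∈ S`, that is,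
`y ∈ (s-1)A`.
-/

theorem Set.ncard_sub_ncard_le_of_injOn {α : Type*} {s t u : Set α} {f : α → α}
    (hst : s ⊆ t) (htu : t ⊆ u) (hu : u.Finite) (hf : Set.MapsTo f (t \ s) (u \ t))
    (hinj : Set.InjOn f (t \ s)) :
    (t.ncard : ℤ) - s.ncard ≤ u.ncard - t.ncard := by
  have hts := Set.ncard_sdiff_add_ncard_of_subset hst (hu.subset htu)
  have hut := Set.ncard_sdiff_add_ncard_of_subset htu hu
  have hle := Set.ncard_le_ncard_of_injOn f hf hinj (hu.subset Set.sdiff_subset)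
  omega

section Sumset

variable {n : ℕ} {a : ℕ → ℕ}

lemma sumset_zero : sumset n a 0 = {0} := by
  ext x
  simp [sumset]

lemma mem_sumset_succ_iff {s x : ℕ} :
    x ∈ sumset n a (s + 1) ↔ ∃ j < n, ∃ z ∈ sumset n a s, x = z + a j := by
  constructor
  · rintro ⟨f, hf, rfl⟩
    exact ⟨f 0, hf 0, _, ⟨fun i => f i.succ, fun i => hf _, rfl⟩,
      by rw [Fin.sum_univ_succ, add_comm]⟩
  · rintro ⟨j, hj, z, ⟨f, hf, rfl⟩, rfl⟩
    refine ⟨Fin.cons j f, fun i => Fin.cases hj hf i, ?_⟩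
    simp [Fin.sum_univ_succ, add_comm]

lemma add_mem_sumset {s t x y : ℕ} (hx : x ∈ sumset n a s) (hy : y ∈ sumset n a t) :
    x + y ∈ sumset n a (s + t) := by
  induction t generalizing y with
  | zero => simp_all [sumset_zero]
  | succ t ih =>
    obtain ⟨j, hj, z, hz, rfl⟩ := mem_sumset_succ_iff.1 hy
    exact mem_sumset_succ_iff.2 ⟨j, hj, _, ih hz, (add_assoc _ _ _).symm⟩

lemma sumset_subset_succ (hn : 0 < n) (ha0 : a 0 = 0) (s : ℕ) :
    sumset n a s ⊆ sumset n a (s + 1) := fun x hx =>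
  mem_sumset_succ_iff.2 ⟨0, hn, x, hx, by rw [ha0, add_zero]⟩

lemma sumset_finite (s : ℕ) : (sumset n a s).Finite :=
  (Set.finite_range fun f : Fin s → Fin n => ∑ i, a (f i)).subset
    fun _ ⟨f, hf, hx⟩ => ⟨fun i => ⟨f i, hf i⟩, hx.symm⟩

lemma le_mul_of_mem_sumset {d s x : ℕ} (hle : ∀ i < n, a i ≤ d) (hx : x ∈ sumset n a s) :
    x ≤ s * d := by
  obtain ⟨f, hf, rfl⟩ := hx
  calc ∑ i, a (f i) ≤ ∑ _i : Fin s, d := Finset.sum_le_sum fun i _ => hle _ (hf i)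
    _ = s * d := by simp

end Sumset

section Semigroup

variable {n d : ℕ} {a : ℕ → ℕ}

lemma mem_SS_iff (hle : ∀ i < n, a i ≤ d) {p : ℕ × ℕ} :
    p ∈ SS n d a ↔ ∃ s, p.1 ∈ sumset n a s ∧ p.1 + p.2 = s * d := by
  constructor
  · intro hp
    induction hp using AddSubmonoid.closure_induction with
    | mem q hq =>
      obtain ⟨i, hi, rfl⟩ := hq
      exact ⟨1, mem_sumset_succ_iff.2 ⟨i, hi, 0, by simp [sumset_zero], by simp⟩,
        by have := hle i hi; simp; omega⟩
    | zero => exact ⟨0, by simp [sumset_zero]⟩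
    | add q r _ _ ihq ihr =>
      obtain ⟨s, hqs, hq⟩ := ihq
      obtain ⟨t, hrt, hr⟩ := ihr
      refine ⟨s + t, add_mem_sumset hqs hrt, ?_⟩
      simp only [Prod.fst_add, Prod.snd_add, add_mul]
      omega
  · obtain ⟨x, y⟩ := p
    rintro ⟨s, hx, hxy⟩
    induction s generalizing x y with
    | zero =>
      obtain rfl : x = 0 := by simpa [sumset_zero] using hx
      obtain rfl : y = 0 := by simpa using hxy
      exact zero_mem _
    | succ s ih =>
      obtain ⟨j, hj, z, hz, rfl⟩ := mem_sumset_succ_iff.1 hx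
      have hz_le := le_mul_of_mem_sumset hle hz
      have hj_le := hle j hj
      rw [add_one_mul] at hxy
      have hsplit : (z + a j, y) = (z, s * d - z) + (a j, d - a j) := by
        ext <;> simp only [Prod.fst_add, Prod.snd_add]
        omega
      rw [hsplit]
      exact add_mem (ih z (s * d - z) hz (by omega)) (AddSubmonoid.subset_closure ⟨j, hj, rfl⟩)

lemma mem_sumset_of_add_mem_sumset (hd : 0 < d) (hle : ∀ i < n, a i ≤ d)
    (hdA : ∃ j < n, a j = d) (hCM : ES n d a = ∅) {s y : ℕ}
    (hy : y ∈ sumset n a (s + 1)) (hyd : y + d ∈ sumset n a (s + 1)) :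
    y ∈ sumset n a s := by
  obtain ⟨j, hj, haj⟩ := hdA
  have hyd_le := le_mul_of_mem_sumset hle hyd
  have hlev : (s + 1) * d = s * d + d := add_one_mul s d
  set p : ℕ × ℕ := (y + d, s * d + d - y) with hp_def
  have hp : p ∈ SS n d a := (mem_SS_iff hle).2
    ⟨s + 2, mem_sumset_succ_iff.2 ⟨j, hj, y, hy, by rw [haj]⟩,
      by simp only [hp_def]; rw [add_mul]; omega⟩
  have hp_sub_vert : ∃ q ∈ SS n d a, q + (0, d) = p :=
    ⟨(y + d, s * d - y), (mem_SS_iff hle).2 ⟨s + 1, hyd, by simp only; omega⟩,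
      by simp only [hp_def, Prod.mk_add_mk, Prod.mk.injEq]; omega⟩
  have hp_sub_horiz : ∃ q ∈ SS n d a, q + (d, 0) = p :=
    ⟨(y, s * d + d - y), (mem_SS_iff hle).2 ⟨s + 1, hy, by simp only; omega⟩,
      by simp [hp_def]⟩
  obtain ⟨⟨x, z⟩, hq, hqp⟩ : ∃ q ∈ SS n d a, q + (d, d) = p := by
    by_contra h
    exact Set.eq_empty_iff_forall_notMem.1 hCM p ⟨hp, hp_sub_vert, hp_sub_horiz, h⟩
  obtain ⟨t, hx, hxz⟩ := (mem_SS_iff hle).1 hq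
  simp only [hp_def, Prod.mk_add_mk, Prod.mk.injEq] at hqp
  obtain rfl : x = y := by omega
  obtain rfl : t = s := Nat.eq_of_mul_eq_mul_right hd (by omega)
  exact hx

lemma mapsTo_add_sumset_diff (hd : 0 < d) (hle : ∀ i < n, a i ≤ d)
    (hdA : ∃ j < n, a j = d) (hCM : ES n d a = ∅) (s : ℕ) :
    Set.MapsTo (· + d) (sumset n a (s + 1) \ sumset n a s)
      (sumset n a (s + 2) \ sumset n a (s + 1)) := by
  rintro y ⟨hy, hys⟩
  obtain ⟨j, hj, haj⟩ := hdA
  exact ⟨mem_sumset_succ_iff.2 ⟨j, hj, y, hy, by rw [haj]⟩,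
    fun hyd => hys (mem_sumset_of_add_mem_sumset hd hle ⟨j, hj, haj⟩ hCM hy hyd)⟩

end Semigroup

theorem CM_increasing_differences_general (n d : ℕ) (a : ℕ → ℕ)
    (hn : 4 ≤ n)
    (ha0 : a 0 = 0)
    (had : a (n - 1) = d)
    (hmono : ∀ i j, i < j → j ≤ n - 1 → a i < a j)
    (hCM : ES n d a = ∅) :
    ∀ s : ℕ, 1 ≤ s →
      ((sumset n a s).ncard : ℤ) - ((sumset n a (s - 1)).ncard : ℤ)
        ≤ ((sumset n a (s + 1)).ncard : ℤ) - ((sumset n a s).ncard : ℤ) := by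
  intro s hs
  obtain ⟨s, rfl⟩ := Nat.exists_eq_add_of_le' hs
  have hd : 0 < d := had ▸ ha0 ▸ hmono 0 (n - 1) (by omega) le_rfl
  have hle : ∀ i < n, a i ≤ d := fun i hi => by
    rcases (Nat.le_sub_one_of_lt hi).eq_or_lt with rfl | hlt
    · exact had.le
    · exact had ▸ (hmono i _ hlt le_rfl).le
  rw [Nat.add_sub_cancel]
  exact Set.ncard_sub_ncard_le_of_injOn (sumset_subset_succ (by omega) ha0 s)
    (sumset_subset_succ (by omega) ha0 (s + 1)) (sumset_finite _)
    (mapsTo_add_sumset_diff hd hle ⟨n - 1, by omega, had⟩ hCM s)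
    (fun _ _ _ _ => Nat.add_right_cancel)

/-- If `E_S = ∅` (i.e., `C_A` is arithmetically Cohen–Macaulay), then the sequence
`(|sA| - |(s-1)A|)ₛ` is increasing: for all `s ≥ 1`,
`|(s+1)A| - |sA| ≥ |sA| - |(s-1)A|`. -/
theorem CM_increasing_differences (n d : ℕ) (a : ℕ → ℕ)
    (hn : 4 ≤ n)
    (ha0 : a 0 = 0)
    (had : a (n - 1) = d)
    (hmono : ∀ i j, i < j → j ≤ n - 1 → a i < a j)
    (hgcd : (Finset.Icc 1 (n - 1)).gcd a = 1)
    (hCM : ES n d a = ∅) :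
    ∀ s : ℕ, 1 ≤ s →
      ((sumset n a s).ncard : ℤ) - ((sumset n a (s - 1)).ncard : ℤ)
        ≤ ((sumset n a (s + 1)).ncard : ℤ) - ((sumset n a s).ncard : ℤ) :=
  CM_increasing_differences_general n d a hn ha0 had hmono hCM

end SumsetsCurve
end

section
/- If S′ ≠ S (equivalently, the projective monomial curve associated to A is not arithmetically Cohen–Macaulay), then the sets {s ∈ ℕ : E_{s+2} ≠ ∅} and {s ∈ ℕ : (S′ ∖ S) ∩ L_s ≠ ∅} are both nonempty and bounded above, and their maxima coincide: max{s : E_{s+2} ≠ ∅} = max{s : (S′ ∖ S) ∩ L_s ≠ ∅}. -/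
open scoped BigOperators

namespace SumsetsCurve

/-!
`S ⊆ S'`, and the two agree on high levels: a point `(x, y) ∈ S₁ × S₂` on level `s` lies in `S`
as soon as `x` is a sum of at most `s` elements of `A` or `y` one of at most `s` elements of
`d - A`, which the conductor of `S₁` guarantees for large `s`. If `p ∈ E_{s+2}`, then
`p - (d, d) = (p - (d, 0)) - (0, d)` lies in `G`, hence in `S' \ S`, on level `s`. Conversely,
if `p ∈ S' \ S` lies on the top level `s` of `S' \ S`, then `p + (0, d)`, `p + (d, 0)` and
`p + (d, d)` are points of `S'` on higher levels, hence of `S`, so `p + (d, d) ∈ E_{s+2}`.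
-/

def HasRep (n : ℕ) (g : ℕ → ℕ) (x t : ℕ) : Prop :=
  ∃ m : Fin n → ℕ, x = ∑ i, m i * g i ∧ ∑ i, m i = t

section HasRep

variable {n : ℕ} {g : ℕ → ℕ} {x t : ℕ}

lemma hasRep_zero : HasRep n g 0 0 := ⟨0, by simp, by simp⟩

lemma HasRep.add {x' t' : ℕ} (h : HasRep n g x t) (h' : HasRep n g x' t') :
    HasRep n g (x + x') (t + t') := by
  obtain ⟨m, rfl, rfl⟩ := h
  obtain ⟨m', rfl, rfl⟩ := h'
  exact ⟨m + m', by simp [Finset.sum_add_distrib, add_mul], by simp [Finset.sum_add_distrib]⟩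

lemma hasRep_mul {i : ℕ} (hi : i < n) (k : ℕ) : HasRep n g (k * g i) k :=
  ⟨Pi.single ⟨i, hi⟩ k, by simp [Pi.single_apply], by simp⟩

lemma exists_hasRep_le_of_mem_numSG (hx : x ∈ numSG {y | ∃ i < n, g i = y}) :
    ∃ t ≤ x, HasRep n g x t := by
  induction hx using AddSubmonoid.closure_induction with
  | mem x hx =>
    obtain ⟨i, hi, rfl⟩ := hx
    rcases Nat.eq_zero_or_pos (g i) with h0 | hpos
    · exact ⟨0, by omega, by rw [h0]; exact hasRep_zero⟩
    · exact ⟨1, hpos, by simpa using hasRep_mul (g := g) hi 1⟩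
  | zero => exact ⟨0, le_rfl, hasRep_zero⟩
  | add x y _ _ hx hy =>
    obtain ⟨t, htx, hx⟩ := hx
    obtain ⟨t', hty, hy⟩ := hy
    exact ⟨t + t', by omega, hx.add hy⟩

lemma exists_add_mul_lt {S : Set ℕ} {c d : ℕ} (hd : 0 < d) (hc : ∀ m ≥ c, m ∈ S)
    (hx : x ∈ S) : ∃ u ∈ S, ∃ k, u < c + d ∧ x = u + k * d := by
  by_cases hxc : x < c + d
  · exact ⟨x, hx, 0, hxc, by simp⟩
  · have hmod := Nat.mod_lt (x - c) hd
    have hdiv := Nat.mod_add_div' (x - c) d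
    exact ⟨c + (x - c) % d, hc _ (by omega), (x - c) / d, by omega, by omega⟩

lemma exists_hasRep_mul_le {c j : ℕ} (hj : j < n) (hgj : 0 < g j)
    (hc : ∀ m ≥ c, m ∈ numSG {y | ∃ i < n, g i = y}) (hx : x ∈ numSG {y | ∃ i < n, g i = y}) :
    ∃ t, HasRep n g x t ∧ t * g j ≤ x + (c + g j) * g j := by
  obtain ⟨u, hu, k, huc, rfl⟩ := exists_add_mul_lt hgj hc hx
  obtain ⟨t, htu, hrep⟩ := exists_hasRep_le_of_mem_numSG hu
  refine ⟨t + k, hrep.add (hasRep_mul hj k), ?_⟩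
  have : t * g j ≤ (c + g j) * g j := Nat.mul_le_mul_right _ (by omega)
  rw [add_mul]
  omega

end HasRep

lemma two_le_of_gcd_Icc_eq_one {n : ℕ} {a : ℕ → ℕ}
    (hgcd : (Finset.Icc 1 (n - 1)).gcd a = 1) : 2 ≤ n := by
  by_contra! hn
  rw [Finset.Icc_eq_empty (by omega), Finset.gcd_empty] at hgcd
  exact zero_ne_one hgcd

lemma exists_forall_ge_mem_S1 {n : ℕ} {a : ℕ → ℕ}
    (hgcd : (Finset.Icc 1 (n - 1)).gcd a = 1) : ∃ c, ∀ m ≥ c, m ∈ S1 n a := by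
  obtain ⟨c, hc⟩ := Nat.exists_mem_closure_of_ge {x | ∃ i < n, a i = x}
  have hgcd_dvd : Nat.setGcd {x | ∃ i < n, a i = x} ∣ 1 :=
    hgcd ▸ Finset.dvd_gcd fun i hi => Nat.setGcd_dvd_of_mem ⟨i, by grind, rfl⟩
  exact ⟨c, fun m hm => hc m hm (hgcd_dvd.trans (one_dvd m))⟩

section Semigroup

variable {n d : ℕ} {a : ℕ → ℕ}

lemma gen_mem_SS {i : ℕ} (hi : i < n) : (a i, d - a i) ∈ SS n d a :=
  AddSubmonoid.subset_closure ⟨i, hi, rfl⟩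

lemma sum_mem_SS (m : Fin n → ℕ) : (∑ i, m i * a i, ∑ i, m i * (d - a i)) ∈ SS n d a := by
  have : (∑ i, m i * a i, ∑ i, m i * (d - a i)) = ∑ i, m i • (a i, d - a i) := by
    ext <;> simp [Prod.fst_sum, Prod.snd_sum]
  rw [this]
  exact AddSubmonoid.sum_mem _ fun i _ => AddSubmonoid.nsmul_mem _ (gen_mem_SS i.2) _

lemma sum_mul_add_sum_mul_sub (haled : ∀ i < n, a i ≤ d) (m : Fin n → ℕ) :
    ∑ i, m i * a i + ∑ i, m i * (d - a i) = (∑ i, m i) * d := by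
  rw [← Finset.sum_add_distrib, Finset.sum_mul]
  refine Finset.sum_congr rfl fun i _ => ?_
  rw [← mul_add, Nat.add_sub_cancel' (haled i i.2)]

lemma mk_mem_SS_of_hasRep_fst (haled : ∀ i < n, a i ≤ d) (h0d : (0, d) ∈ SS n d a)
    {x y s t : ℕ} (h : HasRep n a x t) (hts : t ≤ s) (hxy : x + y = s * d) :
    (x, y) ∈ SS n d a := by
  obtain ⟨m, rfl, rfl⟩ := h
  have hsum := sum_mul_add_sum_mul_sub haled m
  have hle : (∑ i, m i) * d ≤ s * d := Nat.mul_le_mul_right d hts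
  have : (∑ i, m i * a i, y) =
      (∑ i, m i * a i, ∑ i, m i * (d - a i)) + (s - ∑ i, m i) • (0, d) := by
    ext
    · simp
    · simp only [Prod.snd_add, Prod.smul_snd, smul_eq_mul, Nat.sub_mul]
      omega
  rw [this]
  exact add_mem (sum_mem_SS m) (AddSubmonoid.nsmul_mem _ h0d _)

lemma mk_mem_SS_of_hasRep_snd (haled : ∀ i < n, a i ≤ d) (hd0 : (d, 0) ∈ SS n d a)
    {x y s t : ℕ} (h : HasRep n (fun i => d - a i) y t) (hts : t ≤ s) (hxy : x + y = s * d) :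
    (x, y) ∈ SS n d a := by
  obtain ⟨m, rfl, rfl⟩ := h
  beta_reduce at hxy ⊢
  have hsum := sum_mul_add_sum_mul_sub haled m
  have hle : (∑ i, m i) * d ≤ s * d := Nat.mul_le_mul_right d hts
  have : (x, ∑ i, m i * (d - a i)) =
      (∑ i, m i * a i, ∑ i, m i * (d - a i)) + (s - ∑ i, m i) • (d, 0) := by
    ext
    · simp only [Prod.fst_add, Prod.smul_fst, smul_eq_mul, Nat.sub_mul]
      omega
    · simp
  rw [this]
  exact add_mem (sum_mem_SS m) (AddSubmonoid.nsmul_mem _ hd0 _)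

lemma fst_mem_S1_of_mem_SS {p : ℕ × ℕ} (hp : p ∈ SS n d a) : p.1 ∈ S1 n a := by
  induction hp using AddSubmonoid.closure_induction with
  | mem p hp =>
    obtain ⟨i, hi, rfl⟩ := hp
    exact AddSubmonoid.subset_closure ⟨i, hi, rfl⟩
  | zero => exact zero_mem (AddSubmonoid.closure _)
  | add p q _ _ hp hq => exact add_mem hp hq

lemma snd_mem_S2_of_mem_SS {p : ℕ × ℕ} (hp : p ∈ SS n d a) : p.2 ∈ S2 n d a := by
  induction hp using AddSubmonoid.closure_induction with
  | mem p hp =>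
    obtain ⟨i, hi, rfl⟩ := hp
    exact AddSubmonoid.subset_closure ⟨i, hi, rfl⟩
  | zero => exact zero_mem (AddSubmonoid.closure _)
  | add p q _ _ hp hq => exact add_mem hp hq

lemma cast_mem_G_of_mem_SS (haled : ∀ i < n, a i ≤ d) {p : ℕ × ℕ} (hp : p ∈ SS n d a) :
    ((p.1 : ℤ), (p.2 : ℤ)) ∈ G n d a := by
  induction hp using AddSubmonoid.closure_induction with
  | mem p hp =>
    obtain ⟨i, hi, rfl⟩ := hp
    exact AddSubgroup.subset_closure ⟨i, hi, by simp [Nat.cast_sub (haled i hi)]⟩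
  | zero => exact zero_mem (G n d a)
  | add p q _ _ hp hq => simpa using add_mem hp hq

lemma dvd_add_of_mem_G {p : ℤ × ℤ} (hp : p ∈ G n d a) : (d : ℤ) ∣ p.1 + p.2 := by
  induction hp using AddSubgroup.closure_induction with
  | mem p hp =>
    obtain ⟨i, hi, rfl⟩ := hp
    simp
  | zero => simp
  | add p q _ _ hp hq => simpa [add_add_add_comm] using dvd_add hp hq
  | neg p _ hp =>
    rw [Prod.fst_neg, Prod.snd_neg, ← neg_add]
    exact hp.neg_right

lemma mk_mem_SZ_iff {x y : ℕ} : ((x : ℤ), (y : ℤ)) ∈ SZ n d a ↔ (x, y) ∈ SS n d a := by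
  simp [SZ]

lemma mk_mem_Sprime_iff {x y : ℕ} :
    ((x : ℤ), (y : ℤ)) ∈ Sprime n d a ↔
      ((x : ℤ), (y : ℤ)) ∈ G n d a ∧ x ∈ S1 n a ∧ y ∈ S2 n d a := by
  simp [Sprime, S1Z, S2Z]

lemma exists_eq_mk_of_mem_Sprime {p : ℤ × ℤ} (hp : p ∈ Sprime n d a) :
    ∃ x y : ℕ, p = ((x : ℤ), (y : ℤ)) := by
  obtain ⟨-, ⟨x, -, hx⟩, ⟨y, -, hy⟩⟩ := hp
  exact ⟨x, y, Prod.ext hx.symm hy.symm⟩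

lemma SZ_subset_Sprime (haled : ∀ i < n, a i ≤ d) : SZ n d a ⊆ Sprime n d a := by
  rintro _ ⟨p, hp, rfl⟩
  exact mk_mem_Sprime_iff.2
    ⟨cast_mem_G_of_mem_SS haled hp, fst_mem_S1_of_mem_SS hp, snd_mem_S2_of_mem_SS hp⟩

lemma mk_add_mem_Sprime (haled : ∀ i < n, a i ≤ d) {x y u v : ℕ}
    (hxy : ((x : ℤ), (y : ℤ)) ∈ Sprime n d a) (huv : (u, v) ∈ SS n d a) :
    (((x + u : ℕ) : ℤ), ((y + v : ℕ) : ℤ)) ∈ Sprime n d a := by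
  obtain ⟨hG, hx, hy⟩ := mk_mem_Sprime_iff.1 hxy
  refine mk_mem_Sprime_iff.2 ⟨?_, add_mem hx (fst_mem_S1_of_mem_SS huv),
    add_mem hy (snd_mem_S2_of_mem_SS huv)⟩
  simpa using add_mem hG (cast_mem_G_of_mem_SS haled huv)

end Semigroup

def exceptionalLevels (n d : ℕ) (a : ℕ → ℕ) : Set ℕ := {s | Es n d a (s + 2) ≠ ∅}

def SprimeDiffLevels (n d : ℕ) (a : ℕ → ℕ) : Set ℕ :=
  {s | ∃ p ∈ Sprime n d a \ SZ n d a, p.1 + p.2 = (s : ℤ) * d}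

section Levels

variable {n d : ℕ} {a : ℕ → ℕ}

lemma mk_mem_SS_of_level_ge (haled : ∀ i < n, a i ≤ d) (h0d : (0, d) ∈ SS n d a)
    {j c : ℕ} (hj : j < n) (haj : a j = d) (hd : 0 < d) (hc : ∀ m ≥ c, m ∈ S1 n a)
    {x y s : ℕ} (hx : x ∈ S1 n a) (hy : y ∈ S2 n d a) (hxy : x + y = s * d)
    (hs : (c + d) * d ≤ s) : (x, y) ∈ SS n d a := by
  by_cases hys : y ≤ s
  · obtain ⟨t, hty, hrep⟩ := exists_hasRep_le_of_mem_numSG hy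
    have hd0 : (d, 0) ∈ SS n d a := by simpa [haj] using gen_mem_SS (a := a) (d := d) hj
    exact mk_mem_SS_of_hasRep_snd haled hd0 hrep (hty.trans hys) hxy
  · obtain ⟨t, hrep, ht⟩ := exists_hasRep_mul_le hj (haj ▸ hd) hc hx
    rw [haj] at ht
    have : t * d < s * d := by omega
    exact mk_mem_SS_of_hasRep_fst haled h0d hrep (Nat.lt_of_mul_lt_mul_right this).le hxy

lemma bddAbove_SprimeDiffLevels (haled : ∀ i < n, a i ≤ d) (h0d : (0, d) ∈ SS n d a)
    {j c : ℕ} (hj : j < n) (haj : a j = d) (hd : 0 < d) (hc : ∀ m ≥ c, m ∈ S1 n a) :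
    BddAbove (SprimeDiffLevels n d a) := by
  refine ⟨(c + d) * d, fun s ⟨p, ⟨hp, hpS⟩, hps⟩ => ?_⟩
  by_contra! hs
  obtain ⟨x, y, rfl⟩ := exists_eq_mk_of_mem_Sprime hp
  obtain ⟨-, hx, hy⟩ := mk_mem_Sprime_iff.1 hp
  have hxy : x + y = s * d := by dsimp only at hps; exact_mod_cast hps
  exact hpS (mk_mem_SZ_iff.2 (mk_mem_SS_of_level_ge haled h0d hj haj hd hc hx hy hxy hs.le))

lemma SprimeDiffLevels_nonempty (haled : ∀ i < n, a i ≤ d) (hNCM : Sprime n d a ≠ SZ n d a) :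
    (SprimeDiffLevels n d a).Nonempty := by
  obtain ⟨p, hp, hpS⟩ : (Sprime n d a \ SZ n d a).Nonempty :=
    Set.sdiff_nonempty.2 fun h => hNCM (h.antisymm (SZ_subset_Sprime haled))
  obtain ⟨x, y, rfl⟩ := exists_eq_mk_of_mem_Sprime hp
  obtain ⟨k, hk⟩ : d ∣ x + y := by
    have := dvd_add_of_mem_G hp.1
    dsimp only at this
    exact_mod_cast this
  exact ⟨k, _, ⟨hp, hpS⟩, by dsimp only; rw [mul_comm]; exact_mod_cast hk⟩

lemma exceptionalLevels_subset (haled : ∀ i < n, a i ≤ d) (h0d : (0, d) ∈ SS n d a) :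
    exceptionalLevels n d a ⊆ SprimeDiffLevels n d a := by
  intro s hs
  obtain ⟨_, ⟨-, ⟨⟨u, v⟩, huv, hdown⟩, ⟨⟨u', v'⟩, huv', hleft⟩, hdiag⟩, hlev⟩ :=
    Set.nonempty_iff_ne_empty.2 hs
  simp only [Prod.mk_add_mk, add_zero] at hdown hleft
  subst hdown
  obtain ⟨hu, rfl⟩ := Prod.mk.inj hleft
  have hlev : u + (v + d) = (s + 2) * d := hlev
  have hlev' : u' + v = s * d := by rw [add_mul] at hlev; omega
  have hw : ((u' : ℤ), (v : ℤ)) ∈ Sprime n d a := by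
    refine mk_mem_Sprime_iff.2 ⟨?_, fst_mem_S1_of_mem_SS huv', snd_mem_S2_of_mem_SS huv⟩
    convert sub_mem (cast_mem_G_of_mem_SS haled huv') (cast_mem_G_of_mem_SS haled h0d) using 1
    simp
  refine ⟨_, ⟨hw, fun hwS => hdiag ⟨(u', v), mk_mem_SZ_iff.1 hwS, ?_⟩⟩, ?_⟩
  · simp [hu]
  · dsimp only
    exact_mod_cast hlev'

lemma mem_exceptionalLevels_of_isGreatest (haled : ∀ i < n, a i ≤ d)
    (h0d : (0, d) ∈ SS n d a) (hd0 : (d, 0) ∈ SS n d a) {s : ℕ}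
    (hs : IsGreatest (SprimeDiffLevels n d a) s) : s ∈ exceptionalLevels n d a := by
  obtain ⟨⟨p, ⟨hp, hpS⟩, hps⟩, hmax⟩ := hs
  obtain ⟨x, y, rfl⟩ := exists_eq_mk_of_mem_Sprime hp
  have hxy : x + y = s * d := by dsimp only at hps; exact_mod_cast hps
  have hshift : ∀ u v k, (u, v) ∈ SS n d a → u + v = k * d → 0 < k →
      (x + u, y + v) ∈ SS n d a := by
    intro u v k huv hk hk0
    by_contra hnot
    have hlev : x + u + (y + v) = (s + k) * d := by rw [add_mul]; omega
    have := hmax ⟨_, ⟨mk_add_mem_Sprime haled hp huv, fun h => hnot (mk_mem_SZ_iff.1 h)⟩,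
      by dsimp only; exact_mod_cast hlev⟩
    omega
  have hdd : (d, d) ∈ SS n d a := by
    rw [show (d, d) = (d, 0) + (0, d) by simp]
    exact add_mem hd0 h0d
  refine Set.nonempty_iff_ne_empty.1 ⟨(x + d, y + d), ⟨hshift d d 2 hdd (by ring) two_pos,
    ⟨(x + d, y), by simpa using hshift d 0 1 hd0 (by ring) one_pos, by simp⟩,
    ⟨(x, y + d), by simpa using hshift 0 d 1 h0d (by ring) one_pos, by simp⟩, ?_⟩, ?_⟩
  · rintro ⟨q, hq, hqp⟩
    obtain rfl : q = (x, y) := by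
      simp only [Prod.ext_iff, Prod.fst_add, Prod.snd_add, add_left_inj] at hqp
      exact Prod.ext hqp.1 hqp.2
    exact hpS (mk_mem_SZ_iff.2 hq)
  · change x + d + (y + d) = (s + 2) * d
    rw [add_mul]
    omega

end Levels

theorem max_Es_eq_max_SprimeDiff_general (n d : ℕ) (a : ℕ → ℕ)
    (ha0 : a 0 = 0)
    (had : a (n - 1) = d)
    (hmono : ∀ i j, i < j → j ≤ n - 1 → a i < a j)
    (hgcd : (Finset.Icc 1 (n - 1)).gcd a = 1)
    (hNCM : Sprime n d a ≠ SZ n d a) :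
    {s : ℕ | Es n d a (s + 2) ≠ ∅}.Nonempty
      ∧ {s : ℕ | ∃ p ∈ Sprime n d a \ SZ n d a, p.1 + p.2 = (s : ℤ) * d}.Nonempty
      ∧ BddAbove {s : ℕ | Es n d a (s + 2) ≠ ∅}
      ∧ BddAbove {s : ℕ | ∃ p ∈ Sprime n d a \ SZ n d a, p.1 + p.2 = (s : ℤ) * d}
      ∧ sSup {s : ℕ | Es n d a (s + 2) ≠ ∅}
          = sSup {s : ℕ | ∃ p ∈ Sprime n d a \ SZ n d a, p.1 + p.2 = (s : ℤ) * d} := by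
  have hn := two_le_of_gcd_Icc_eq_one hgcd
  have hd : 0 < d := by simpa [ha0, had] using hmono 0 (n - 1) (by omega) le_rfl
  have haled : ∀ i < n, a i ≤ d := fun i hi => by
    rcases (Nat.le_sub_one_of_lt hi).lt_or_eq with h | rfl
    · exact had ▸ (hmono i (n - 1) h le_rfl).le
    · exact had.le
  have hlast : n - 1 < n := by omega
  have h0d : (0, d) ∈ SS n d a := by
    simpa [ha0] using gen_mem_SS (a := a) (d := d) (i := 0) (by omega)
  have hd0 : (d, 0) ∈ SS n d a := by simpa [had] using gen_mem_SS (a := a) (d := d) hlast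
  obtain ⟨c, hc⟩ := exists_forall_ge_mem_S1 hgcd
  have hF := bddAbove_SprimeDiffLevels haled h0d hlast had hd hc
  have hFne := SprimeDiffLevels_nonempty haled hNCM
  have hFmax : IsGreatest (SprimeDiffLevels n d a) (sSup (SprimeDiffLevels n d a)) :=
    ⟨Nat.sSup_mem hFne hF, fun _ hs => le_csSup hF hs⟩
  have hEmax : IsGreatest (exceptionalLevels n d a) (sSup (SprimeDiffLevels n d a)) :=
    ⟨mem_exceptionalLevels_of_isGreatest haled h0d hd0 hFmax,
      fun _ hs => hFmax.2 (exceptionalLevels_subset haled h0d hs)⟩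
  exact ⟨hEmax.nonempty, hFne, hEmax.bddAbove, hF, hEmax.csSup_eq⟩

/-- If `S' ≠ S` (i.e., `C_A` is not arithmetically Cohen–Macaulay), then the sets
`{s : E_{s+2} ≠ ∅}` and `{s : (S' \ S) ∩ L_s ≠ ∅}` are nonempty and bounded above,
and their maxima coincide. -/
theorem max_Es_eq_max_SprimeDiff (n d : ℕ) (a : ℕ → ℕ)
    (hn : 4 ≤ n)
    (ha0 : a 0 = 0)
    (had : a (n - 1) = d)
    (hmono : ∀ i j, i < j → j ≤ n - 1 → a i < a j)
    (hgcd : (Finset.Icc 1 (n - 1)).gcd a = 1)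
    (hNCM : Sprime n d a ≠ SZ n d a) :
    {s : ℕ | Es n d a (s + 2) ≠ ∅}.Nonempty
      ∧ {s : ℕ | ∃ p ∈ Sprime n d a \ SZ n d a, p.1 + p.2 = (s : ℤ) * d}.Nonempty
      ∧ BddAbove {s : ℕ | Es n d a (s + 2) ≠ ∅}
      ∧ BddAbove {s : ℕ | ∃ p ∈ Sprime n d a \ SZ n d a, p.1 + p.2 = (s : ℤ) * d}
      ∧ sSup {s : ℕ | Es n d a (s + 2) ≠ ∅}
          = sSup {s : ℕ | ∃ p ∈ Sprime n d a \ SZ n d a, p.1 + p.2 = (s : ℤ) * d} :=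
  max_Es_eq_max_SprimeDiff_general n d a ha0 had hmono hgcd hNCM

end SumsetsCurve
end
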